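/- arXiv:1501.04542 — 3 statements merged into one kernel-verified Lean document; each statement's English description precedes it below -/
import Mathlib

section
/- Let ζ₁,…,ζₙ be i.i.d. real random variables, S_i = ζ₁+⋯+ζ_i the random walk, and σ = max{i ≤ n : S_i ≤ 0} (with σ = 0 if the set is empty, assuming S_0 = 0 ≤ 0 so σ is well-defined). Define the time-reversed process Ŝ_i = S_σ − S_{σ−i} for 0 ≤ i ≤ σ. Then the process (Ŝ_i)_{0 ≤ i ≤ σ} has the same law as (S_i)_{0 ≤ i ≤ σ}. -/
open MeasureTheory ProbabilityTheory Finset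

/-!
If the last nonpositive time is `τ = k`, reversing the order of the first `k` increments turns
the stopped walk into the time-reversed walk and leaves the walk after time `k`, hence the event
`{τ = k}`, unchanged. The increments are i.i.d., so their joint law is invariant under this
permutation; thus both paths have the same law on each event `{τ = k}`, and summing over `k`
gives the claim.
-/

lemma measurePreserving_comp_perm_infinitePi {ι X : Type*} [MeasurableSpace X] (m : Measure X)
    [IsProbabilityMeasure m] (e : Equiv.Perm ι) :
    MeasurePreserving (fun x : ι → X => x ∘ e) (Measure.infinitePi fun _ => m)
      (Measure.infinitePi fun _ => m) := by
  have h : (fun x : ι → X => x ∘ e) = Equiv.piCongrLeft (fun _ => X) e.symm := by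
    ext x i; simp [Equiv.piCongrLeft_apply_eq_cast]
  refine ⟨measurable_pi_lambda _ fun i => measurable_pi_apply (e i), ?_⟩
  rw [h]
  exact Measure.infinitePi_map_piCongrLeft (μ := fun _ => m) e.symm

lemma measure_eq_tsum_inter_preimage_singleton {α β : Type*} [MeasurableSpace α]
    [MeasurableSpace β] [MeasurableSingletonClass β] [Countable β] (ν : Measure α) {f : α → β}
    (hf : Measurable f) {s : Set α} (hs : MeasurableSet s) :
    ν s = ∑' b, ν (s ∩ f ⁻¹' {b}) := by
  have hcover : ⋃ b, f ⁻¹' {b} = Set.univ :=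
    Set.eq_univ_of_forall fun x => Set.mem_iUnion.2 ⟨_, rfl⟩
  rw [← measure_iUnion, ← Set.inter_iUnion, hcover, Set.inter_univ]
  · exact fun i j hij => (pairwise_disjoint_fiber f hij).mono Set.inter_subset_right
      Set.inter_subset_right
  · exact fun b => hs.inter (hf (measurableSet_singleton b))

namespace WalkReversal

section Algebra

variable {M : Type*} [AddCommGroup M]

def walk (x : ℕ → M) (i : ℕ) : M := ∑ j ∈ range i, x j

@[simp]
lemma walk_zero (x : ℕ → M) : walk x 0 = 0 := sum_range_zero x

def prefixRev (k : ℕ) : Equiv.Perm ℕ :=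
  Function.Involutive.toPerm (fun j => if j < k then k - 1 - j else j) fun j => by
    dsimp only; split_ifs <;> omega

lemma prefixRev_involutive (k : ℕ) : Function.Involutive (prefixRev k) :=
  Function.Involutive.toPerm_involutive _

lemma prefixRev_apply_of_lt {k j : ℕ} (h : j < k) : prefixRev k j = k - 1 - j := if_pos h

lemma prefixRev_apply_of_le {k j : ℕ} (h : k ≤ j) : prefixRev k j = j := if_neg (by omega)

lemma walk_comp_prefixRev_of_le (x : ℕ → M) {k i : ℕ} (h : i ≤ k) :
    walk (x ∘ prefixRev k) i = walk x k - walk x (k - i) := by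
  have hsplit : walk x k = walk x (k - i) + ∑ j ∈ range i, x (k - i + j) := by
    rw [walk, walk, ← sum_range_add, Nat.sub_add_cancel h]
  rw [hsplit, add_sub_cancel_left, walk, ← sum_range_reflect]
  refine sum_congr rfl fun j hj => ?_
  have := mem_range.1 hj
  rw [Function.comp_apply, prefixRev_apply_of_lt (by omega)]
  congr 1
  omega

lemma walk_comp_prefixRev_of_ge (x : ℕ → M) {k i : ℕ} (h : k ≤ i) :
    walk (x ∘ prefixRev k) i = walk x i := by
  obtain ⟨d, rfl⟩ := Nat.exists_eq_add_of_le h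
  have hk : walk (x ∘ prefixRev k) k = walk x k := by
    rw [walk_comp_prefixRev_of_le x le_rfl, Nat.sub_self, walk_zero, sub_zero]
  unfold walk at hk ⊢
  rw [sum_range_add, sum_range_add, hk]
  congr 1
  refine sum_congr rfl fun j _ => ?_
  rw [Function.comp_apply, prefixRev_apply_of_le (by omega)]

end Algebra

variable (n : ℕ)

noncomputable def lastNonposTime (x : ℕ → ℝ) : ℕ := sSup {i | i ≤ n ∧ walk x i ≤ 0}

lemma lastNonposTime_eq_iff (x : ℕ → ℝ) (k : ℕ) :
    lastNonposTime n x = k ↔ k ≤ n ∧ walk x k ≤ 0 ∧ ∀ i, k < i → i ≤ n → 0 < walk x i := by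
  set T := {i | i ≤ n ∧ walk x i ≤ 0}
  have hne : T.Nonempty := ⟨0, Nat.zero_le n, (walk_zero x).le⟩
  have hbdd : BddAbove T := ⟨n, fun _ hi => hi.1⟩
  constructor
  · rintro rfl
    obtain ⟨hle, hwalk⟩ : lastNonposTime n x ∈ T := Nat.sSup_mem hne hbdd
    refine ⟨hle, hwalk, fun i hlt hi => lt_of_not_ge fun hnonpos => ?_⟩
    exact hlt.not_ge (le_csSup hbdd ⟨hi, hnonpos⟩)
  · rintro ⟨hk, hwalk, hpos⟩
    refine IsGreatest.csSup_eq ⟨⟨hk, hwalk⟩, fun i ⟨hi, hnonpos⟩ => ?_⟩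
    exact le_of_not_gt fun hlt => (hpos i hlt hi).not_ge hnonpos

lemma lastNonposTime_comp_prefixRev {x : ℕ → ℝ} {k : ℕ} (h : lastNonposTime n x = k) :
    lastNonposTime n (x ∘ prefixRev k) = k := by
  obtain ⟨hk, hwalk, hpos⟩ := (lastNonposTime_eq_iff n x k).1 h
  refine (lastNonposTime_eq_iff n _ k).2 ⟨hk, ?_, fun i hlt hi => ?_⟩
  · rwa [walk_comp_prefixRev_of_ge x le_rfl]
  · rw [walk_comp_prefixRev_of_ge x hlt.le]
    exact hpos i hlt hi

noncomputable def stoppedWalk (x : ℕ → ℝ) : ℕ × (ℕ → ℝ) :=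
  (lastNonposTime n x, fun i => walk x (min i (lastNonposTime n x)))

noncomputable def reversedWalk (x : ℕ → ℝ) : ℕ × (ℕ → ℝ) :=
  (lastNonposTime n x,
    fun i => walk x (lastNonposTime n x) - walk x (lastNonposTime n x - min i (lastNonposTime n x)))

lemma stoppedWalk_comp_prefixRev {x : ℕ → ℝ} {k : ℕ} (h : lastNonposTime n x = k) :
    stoppedWalk n (x ∘ prefixRev k) = reversedWalk n x := by
  simp only [stoppedWalk, reversedWalk, lastNonposTime_comp_prefixRev n h, h,
    walk_comp_prefixRev_of_le x (min_le_right _ k)]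

lemma measurable_walk (i : ℕ) : Measurable fun x : ℕ → ℝ => walk x i :=
  Finset.measurable_sum _ fun j _ => measurable_pi_apply j

lemma measurable_lastNonposTime : Measurable (lastNonposTime n) := by
  refine measurable_to_countable' fun k => ?_
  simp only [Set.preimage, Set.mem_singleton_iff, lastNonposTime_eq_iff,
    measurableSet_setOfPred]
  have hnonpos : Measurable fun x : ℕ → ℝ => walk x k ≤ 0 :=
    measurableSet_setOfPred.1 (measurableSet_le (measurable_walk k) measurable_const)
  have hpos (i : ℕ) : Measurable fun x : ℕ → ℝ => 0 < walk x i :=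
    measurableSet_setOfPred.1 (measurableSet_lt measurable_const (measurable_walk i))
  exact measurable_const.and <| hnonpos.and <|
    Measurable.forall fun i => measurable_const.imp <| measurable_const.imp (hpos i)

lemma measurable_apply_lastNonposTime {β : Type*} [MeasurableSpace β]
    {g : ℕ → (ℕ → ℝ) → β} (hg : ∀ k, Measurable (g k)) :
    Measurable fun x => g (lastNonposTime n x) x :=
  (measurable_from_prod_countable_left (f := fun p => g p.2 p.1) hg).comp
    (measurable_id.prodMk (measurable_lastNonposTime n))

lemma measurable_stoppedWalk : Measurable (stoppedWalk n) :=
  (measurable_lastNonposTime n).prodMk <| measurable_pi_lambda _ fun i =>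
    measurable_apply_lastNonposTime n fun k => measurable_walk (min i k)

lemma measurable_reversedWalk : Measurable (reversedWalk n) :=
  (measurable_lastNonposTime n).prodMk <| measurable_pi_lambda _ fun i =>
    measurable_apply_lastNonposTime n fun k =>
      (measurable_walk k).sub (measurable_walk (k - min i k))

theorem map_reversedWalk_eq_map_stoppedWalk (ν : Measure (ℕ → ℝ))
    (hν : ∀ k, MeasurePreserving (· ∘ prefixRev k) ν ν) :
    ν.map (reversedWalk n) = ν.map (stoppedWalk n) := by
  ext A hA
  rw [Measure.map_apply (measurable_reversedWalk n) hA,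
    Measure.map_apply (measurable_stoppedWalk n) hA,
    measure_eq_tsum_inter_preimage_singleton ν (measurable_lastNonposTime n)
      (measurable_reversedWalk n hA),
    measure_eq_tsum_inter_preimage_singleton ν (measurable_lastNonposTime n)
      (measurable_stoppedWalk n hA)]
  refine tsum_congr fun k => ?_
  have hfiber : reversedWalk n ⁻¹' A ∩ lastNonposTime n ⁻¹' {k}
      = (· ∘ prefixRev k) ⁻¹' (stoppedWalk n ⁻¹' A ∩ lastNonposTime n ⁻¹' {k}) := by
    ext x
    simp only [Set.mem_inter_iff, Set.mem_preimage, Set.mem_singleton_iff]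
    constructor
    · rintro ⟨hA, hk⟩
      exact ⟨stoppedWalk_comp_prefixRev n hk ▸ hA, lastNonposTime_comp_prefixRev n hk⟩
    · rintro ⟨hA, hk⟩
      have hx : (x ∘ prefixRev k) ∘ prefixRev k = x :=
        funext fun j => congrArg x (prefixRev_involutive k j)
      have hk' : lastNonposTime n x = k :=
        hx ▸ lastNonposTime_comp_prefixRev n hk
      exact ⟨stoppedWalk_comp_prefixRev n hk' ▸ hA, hk'⟩
  rw [hfiber, (hν k).measure_preimage]
  exact ((measurable_stoppedWalk n hA).inter
    (measurable_lastNonposTime n (measurableSet_singleton k))).nullMeasurableSet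

end WalkReversal

open WalkReversal

/-- The time-reversed walk Ŝ_i = S_σ − S_{σ−i}, 0 ≤ i ≤ σ, has the same law as
(S_i)_{0 ≤ i ≤ σ}.  Both stopped paths are encoded together with σ as elements
of ℕ × (ℕ → ℝ), the paths being frozen after time σ. -/
theorem stmt_0 {Ω : Type*} [MeasurableSpace Ω] (μ : Measure Ω) [IsProbabilityMeasure μ]
    (n : ℕ) (ζ : ℕ → Ω → ℝ)
    (hmeas : ∀ i, Measurable (ζ i))
    (hindep : ProbabilityTheory.iIndepFun ζ μ)
    (hident : ∀ i, μ.map (ζ i) = μ.map (ζ 0))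
    (S : ℕ → Ω → ℝ) (hS : ∀ i ω, S i ω = ∑ j ∈ Finset.range i, ζ j ω)
    (σ : Ω → ℕ) (hσ : ∀ ω, σ ω = sSup {i | i ≤ n ∧ S i ω ≤ 0}) :
    μ.map (fun ω => ((σ ω, fun i : ℕ => S (σ ω) ω - S (σ ω - min i (σ ω)) ω) : ℕ × (ℕ → ℝ)))
      = μ.map (fun ω => ((σ ω, fun i : ℕ => S (min i (σ ω)) ω) : ℕ × (ℕ → ℝ))) := by
  set increments : Ω → ℕ → ℝ := fun ω j => ζ j ω
  have hincr : Measurable increments := measurable_pi_lambda _ hmeas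
  have : IsProbabilityMeasure (μ.map (ζ 0)) :=
    Measure.isProbabilityMeasure_map (hmeas 0).aemeasurable
  have hlaw : μ.map increments = Measure.infinitePi fun _ => μ.map (ζ 0) := by
    rw [hindep.map_fun_eq_infinitePi_map hmeas]
    simp_rw [hident]
  have hwalk (i : ℕ) (ω : Ω) : S i ω = walk (increments ω) i := hS i ω
  have hτ (ω : Ω) : σ ω = lastNonposTime n (increments ω) := by
    simp only [hσ, hwalk, lastNonposTime]
  simp only [hτ, hwalk]
  change μ.map (reversedWalk n ∘ increments) = μ.map (stoppedWalk n ∘ increments)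
  rw [← Measure.map_map (measurable_reversedWalk n) hincr,
    ← Measure.map_map (measurable_stoppedWalk n) hincr, hlaw]
  exact map_reversedWalk_eq_map_stoppedWalk n _ fun k =>
    measurePreserving_comp_perm_infinitePi _ (prefixRev k)
end

section
/- Let ζ₁,…,ζₙ be i.i.d. real random variables, S_i the random walk, σ = max{i ≤ n : S_i ≤ 0}. Define N⁻ = Σ_{i=1}^σ 1{S_i ≤ 0} and Ñ⁺ = Σ_{i=0}^{σ−1} 1{S_i ≥ S_σ}. Then N⁻ and Ñ⁺ have the same distribution. -/
open MeasureTheory ProbabilityTheory Finset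

/-!
Reversing the first `k` increments of the walk turns its partial sums into `S'_i = S_k - S_{k-i}`
for `i ≤ k` and leaves `S'_i = S_i` for `i ≥ k`. Hence the event `σ = k` is invariant, and on it
`N⁻` of the reversed walk counts the `i < k` with `S_i ≥ S_k`, i.e. it is `Ñ⁺` of the original
walk. So reversal at the random time `σ` carries `N⁻` to `Ñ⁺`; it preserves the law of an i.i.d.
sequence because on each event `σ = k` it acts by one fixed permutation of the coordinates.
-/

theorem MeasureTheory.MeasurePreserving.of_fiberwise {α ι : Type*} [MeasurableSpace α]
    [MeasurableSpace ι] [Countable ι] [MeasurableSingletonClass ι] {ν : Measure α} {σ : α → ι}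
    (hσ : Measurable σ) {R : ι → α → α} (hR : ∀ k, MeasurePreserving (R k) ν ν)
    (hRσ : ∀ k x, σ (R k x) = k ↔ σ x = k) :
    MeasurePreserving (fun x => R (σ x) x) ν ν := by
  set T := fun x => R (σ x) x
  have hfiber : ∀ k A, σ ⁻¹' {k} ∩ T ⁻¹' A = R k ⁻¹' (σ ⁻¹' {k} ∩ A) := by
    intro k A
    ext x
    simp only [Set.mem_inter_iff, Set.mem_preimage, Set.mem_singleton_iff, hRσ]
    constructor <;> rintro ⟨rfl, h⟩ <;> exact ⟨rfl, h⟩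
  have hsplit : ∀ B, B = ⋃ k, σ ⁻¹' {k} ∩ B := fun B => by
    ext x
    simp
  have hdecomp : ∀ B, (∀ k, MeasurableSet (σ ⁻¹' {k} ∩ B)) →
      ν B = ∑' k, ν (σ ⁻¹' {k} ∩ B) := fun B hB => by
    conv_lhs => rw [hsplit B]
    exact measure_iUnion (fun k l hkl =>
      ((pairwise_disjoint_fiber σ) hkl).mono Set.inter_subset_left Set.inter_subset_left) hB
  have hmeas_fiber : ∀ k {A}, MeasurableSet A → MeasurableSet (σ ⁻¹' {k} ∩ A) :=
    fun k _ hA => (hσ (measurableSet_singleton k)).inter hA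
  have hT : Measurable T := fun A hA => by
    rw [hsplit (T ⁻¹' A)]
    exact .iUnion fun k => hfiber k A ▸ (hR k).measurable (hmeas_fiber k hA)
  refine ⟨hT, Measure.ext fun A hA => ?_⟩
  rw [Measure.map_apply hT hA, hdecomp _ (hmeas_fiber · (hT hA)), hdecomp A (hmeas_fiber · hA)]
  congr 1
  funext k
  rw [hfiber, (hR k).measure_preimage (hmeas_fiber k hA).nullMeasurableSet]

namespace RandomWalk

theorem measurePreserving_precomp_of_iIndepFun {Ω ι β : Type*} [MeasurableSpace Ω]
    [MeasurableSpace β] {μ : Measure Ω} [IsProbabilityMeasure μ] {ζ : ι → Ω → β}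
    (hmeas : ∀ i, Measurable (ζ i)) (hindep : iIndepFun ζ μ) {ν : Measure β}
    (hident : ∀ i, μ.map (ζ i) = ν) {g : ι → ι} (hg : g.Injective) :
    MeasurePreserving (fun x i => x (g i)) (μ.map fun ω i => ζ i ω)
      (μ.map fun ω i => ζ i ω) := by
  have hZ : Measurable fun ω i => ζ i ω := measurable_pi_lambda _ hmeas
  have hg_meas : Measurable fun (x : ι → β) i => x (g i) :=
    measurable_pi_lambda _ fun i => measurable_pi_apply (g i)
  refine ⟨hg_meas, ?_⟩
  rw [Measure.map_map hg_meas hZ]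
  change μ.map (fun ω i => ζ (g i) ω) = _
  rw [(hindep.precomp hg).map_fun_eq_infinitePi_map (fun i => hmeas (g i)),
    hindep.map_fun_eq_infinitePi_map hmeas]
  simp only [hident]

def prefixReverse (k j : ℕ) : ℕ := if j < k then k - 1 - j else j

theorem prefixReverse_involutive (k : ℕ) : Function.Involutive (prefixReverse k) := by
  intro j
  unfold prefixReverse
  split_ifs <;> omega

section Walk

variable (n : ℕ) (x : ℕ → ℝ)

def partialSum (i : ℕ) : ℝ := ∑ j ∈ range i, x j

noncomputable def lastNonpos : ℕ := sSup {i | i ≤ n ∧ partialSum x i ≤ 0}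

noncomputable def countNonpos : ℕ :=
  ∑ i ∈ Icc 1 (lastNonpos n x), if partialSum x i ≤ 0 then 1 else 0

noncomputable def countAboveLast : ℕ :=
  ∑ i ∈ range (lastNonpos n x),
    if partialSum x (lastNonpos n x) ≤ partialSum x i then 1 else 0

@[simp]
theorem partialSum_zero : partialSum x 0 = 0 := sum_range_zero x

theorem partialSum_succ (i : ℕ) : partialSum x (i + 1) = partialSum x i + x i :=
  sum_range_succ x i

theorem partialSum_comp_prefixReverse_of_le {k i : ℕ} (h : i ≤ k) :
    partialSum (x ∘ prefixReverse k) i = partialSum x k - partialSum x (k - i) := by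
  induction i with
  | zero => simp
  | succ i ih =>
    have hk : k - i = k - (i + 1) + 1 := by omega
    rw [partialSum_succ, ih (by omega), hk, partialSum_succ, Function.comp_apply, prefixReverse,
      if_pos (by omega), show k - 1 - i = k - (i + 1) by omega]
    ring

theorem partialSum_comp_prefixReverse_of_ge {k i : ℕ} (h : k ≤ i) :
    partialSum (x ∘ prefixReverse k) i = partialSum x i := by
  induction i, h using Nat.le_induction with
  | base => simp [partialSum_comp_prefixReverse_of_le x le_rfl]
  | succ i hki ih =>
    rw [partialSum_succ, ih, partialSum_succ, Function.comp_apply, prefixReverse,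
      if_neg (by omega)]

theorem bddAbove_setOf_partialSum_nonpos : BddAbove {i | i ≤ n ∧ partialSum x i ≤ 0} :=
  ⟨n, fun _ hi => hi.1⟩

theorem lastNonpos_mem : lastNonpos n x ∈ {i | i ≤ n ∧ partialSum x i ≤ 0} :=
  Nat.sSup_mem ⟨0, Nat.zero_le n, (partialSum_zero x).le⟩ (bddAbove_setOf_partialSum_nonpos n x)

theorem lastNonpos_eq_iff {k : ℕ} : lastNonpos n x = k ↔
    k ≤ n ∧ partialSum x k ≤ 0 ∧ ∀ i, k < i → i ≤ n → 0 < partialSum x i := by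
  constructor
  · rintro rfl
    refine ⟨(lastNonpos_mem n x).1, (lastNonpos_mem n x).2, fun i hlt hle => ?_⟩
    by_contra! hi
    exact (le_csSup (bddAbove_setOf_partialSum_nonpos n x) ⟨hle, hi⟩).not_gt hlt
  · rintro ⟨hkn, hk, hpos⟩
    refine le_antisymm (csSup_le ⟨0, Nat.zero_le n, (partialSum_zero x).le⟩ ?_)
      (le_csSup (bddAbove_setOf_partialSum_nonpos n x) ⟨hkn, hk⟩)
    rintro i ⟨hin, hi⟩
    by_contra! hlt
    exact (hpos i hlt hin).not_ge hi

theorem lastNonpos_comp_prefixReverse {k : ℕ} (hk : lastNonpos n x = k) :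
    lastNonpos n (x ∘ prefixReverse k) = k := by
  obtain ⟨hkn, hSk, hpos⟩ := (lastNonpos_eq_iff n x).1 hk
  refine (lastNonpos_eq_iff n _).2 ⟨hkn, ?_, fun i hlt hle => ?_⟩
  · simpa [partialSum_comp_prefixReverse_of_le x le_rfl] using hSk
  · rw [partialSum_comp_prefixReverse_of_ge x hlt.le]
    exact hpos i hlt hle

theorem lastNonpos_comp_prefixReverse_eq_iff (k : ℕ) :
    lastNonpos n (x ∘ prefixReverse k) = k ↔ lastNonpos n x = k := by
  refine ⟨fun h => ?_, lastNonpos_comp_prefixReverse n x⟩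
  simpa [Function.comp_assoc, (prefixReverse_involutive k).comp_self] using
    lastNonpos_comp_prefixReverse n _ h

theorem countNonpos_comp_prefixReverse :
    countNonpos n (x ∘ prefixReverse (lastNonpos n x)) = countAboveLast n x := by
  set k := lastNonpos n x
  rw [countNonpos, lastNonpos_comp_prefixReverse n x rfl, countAboveLast]
  refine sum_nbij' (fun i => k - i) (fun i => k - i) ?_ ?_ ?_ ?_ fun i hi => ?_
  iterate 4 · intro i hi; simp only [mem_Icc, mem_range] at hi ⊢; omega
  simp only [partialSum_comp_prefixReverse_of_le x (mem_Icc.1 hi).2, sub_nonpos, k]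

end Walk

theorem measurable_partialSum (i : ℕ) : Measurable fun x : ℕ → ℝ => partialSum x i :=
  Finset.measurable_sum _ fun j _ => measurable_pi_apply j

theorem measurable_lastNonpos (n : ℕ) : Measurable (lastNonpos n) := by
  refine measurable_to_countable' fun k => ?_
  have hfiber : lastNonpos n ⁻¹' {k} = {x | k ≤ n} ∩ {x | partialSum x k ≤ 0} ∩
      ⋂ i ∈ Ioc k n, {x | 0 < partialSum x i} := by
    ext x
    simp [lastNonpos_eq_iff, and_assoc]
  rw [hfiber]
  exact ((MeasurableSet.const _).inter (measurableSet_le (measurable_partialSum k)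
    measurable_const)).inter (Finset.measurableSet_biInter _ fun i _ =>
      measurableSet_lt measurable_const (measurable_partialSum i))

theorem measurable_countNonpos (n : ℕ) : Measurable (countNonpos n) := by
  let count (k : ℕ) (x : ℕ → ℝ) : ℕ := ∑ i ∈ Icc 1 k, if partialSum x i ≤ 0 then 1 else 0
  have hcount (k : ℕ) : Measurable (count k) := Finset.measurable_sum _ fun i _ =>
    Measurable.ite (measurableSet_le (measurable_partialSum i) measurable_const)
      measurable_const measurable_const
  exact (measurable_from_prod_countable_left (f := fun p => count p.2 p.1) hcount).comp
    (measurable_id.prodMk (measurable_lastNonpos n))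

theorem measurePreserving_comp_prefixReverse_lastNonpos (n : ℕ) {ν : Measure (ℕ → ℝ)}
    (hν : ∀ k, MeasurePreserving (fun x => x ∘ prefixReverse k) ν ν) :
    MeasurePreserving (fun x => x ∘ prefixReverse (lastNonpos n x)) ν ν :=
  MeasurePreserving.of_fiberwise (measurable_lastNonpos n) hν
    fun k x => lastNonpos_comp_prefixReverse_eq_iff n x k

end RandomWalk

open RandomWalk in
/-- Sparre-Andersen / last-passage: `N⁻ = Σ_{i=1}^σ 1{S_i ≤ 0}` and
`Ñ⁺ = Σ_{i=0}^{σ-1} 1{S_i ≥ S_σ}` have the same distribution. -/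
theorem stmt_2 {Ω : Type*} [MeasurableSpace Ω] (μ : Measure Ω) [IsProbabilityMeasure μ]
    (n : ℕ) (ζ : ℕ → Ω → ℝ)
    (hmeas : ∀ i, Measurable (ζ i))
    (hindep : iIndepFun ζ μ)
    (hident : ∀ i, μ.map (ζ i) = μ.map (ζ 0))
    (S : ℕ → Ω → ℝ) (hS : ∀ i ω, S i ω = ∑ j ∈ Finset.range i, ζ j ω)
    (σ : Ω → ℕ) (hσ : ∀ ω, σ ω = sSup {i | i ≤ n ∧ S i ω ≤ 0})
    (Nminus Ntildeplus : Ω → ℕ)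
    (hNminus : ∀ ω, Nminus ω = ∑ i ∈ Finset.Icc 1 (σ ω), if S i ω ≤ 0 then 1 else 0)
    (hNtildeplus : ∀ ω, Ntildeplus ω =
      ∑ i ∈ Finset.range (σ ω), if S (σ ω) ω ≤ S i ω then 1 else 0) :
    μ.map Nminus = μ.map Ntildeplus := by
  let Z : Ω → ℕ → ℝ := fun ω i => ζ i ω
  let T : (ℕ → ℝ) → ℕ → ℝ := fun x => x ∘ prefixReverse (lastNonpos n x)
  have hZ : Measurable Z := measurable_pi_lambda _ hmeas
  have hT : MeasurePreserving T (μ.map Z) (μ.map Z) :=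
    measurePreserving_comp_prefixReverse_lastNonpos n fun k =>
      measurePreserving_precomp_of_iIndepFun hmeas hindep hident
        (prefixReverse_involutive k).injective
  have hNminus' : Nminus = countNonpos n ∘ Z := funext fun ω => by
    simp only [hNminus, hσ, hS]
    rfl
  have hNtildeplus' : Ntildeplus = countNonpos n ∘ T ∘ Z := funext fun ω => by
    rw [Function.comp_apply, Function.comp_apply, countNonpos_comp_prefixReverse]
    simp only [hNtildeplus, hσ, hS]
    rfl
  rw [hNminus', hNtildeplus', ← Measure.map_map (measurable_countNonpos n) (hT.measurable.comp hZ),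
    ← Measure.map_map hT.measurable hZ, hT.map_eq, Measure.map_map (measurable_countNonpos n) hZ]
end

section
/- Let ζ₁,…,ζₙ be i.i.d. real random variables, S_i the random walk, σ = max{i ≤ n : S_i ≤ 0}, and let S̲ = min{S_i : i ≤ σ}, S̄ = max{S_i : i ≤ σ}. Define the forward time of the minimum →F = max{i ≤ σ : S_i = S̲} and the backward time of the maximum ←G = σ − min{i ≤ σ : S_i = S̄}. Then →F and ←G have the same distribution. -/
/-!
Let `k = σ`. Reversing the first `k` increments turns the path `(S_i)_{i ≤ k}` into
`(S_k - S_{k-i})_{i ≤ k}` and leaves `S_i` unchanged for `i ≥ k`. Hence `σ` does not change,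
maxima turn into minima, and the first time `a` of the maximum becomes the last time `k - a` of the
minimum: `→F` of the reversed walk is `←G` of the original one. On each event `{σ = k}` the
reversal is one fixed permutation of the i.i.d. increments, and it maps that event to itself, so it
preserves the law of the increment sequence.
-/

open MeasureTheory ProbabilityTheory Finset

section PathFunctionals

variable {α : Type*}

noncomputable def lastArgmin [LinearOrder α] (f : ℕ → α) (k : ℕ) : ℕ :=
  sSup {i | i ≤ k ∧ ∀ j ≤ k, f i ≤ f j}

noncomputable def firstArgmax [LinearOrder α] (f : ℕ → α) (k : ℕ) : ℕ :=
  sInf {i | i ≤ k ∧ ∀ j ≤ k, f j ≤ f i}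

noncomputable def lastNonpos [LinearOrder α] [Zero α] (n : ℕ) (f : ℕ → α) : ℕ :=
  sSup {i | i ≤ n ∧ f i ≤ 0}

theorem Set.Finite.eq_csInf_image_iff {β : Type*} [ConditionallyCompleteLinearOrder α]
    {f : β → α} {s : Set β} (hs : s.Finite) {i : β} (hi : i ∈ s) :
    f i = sInf (f '' s) ↔ ∀ j ∈ s, f i ≤ f j := by
  refine ⟨fun h j hj => h ▸ csInf_le (hs.image f).bddBelow (Set.mem_image_of_mem f hj),
    fun h => (IsLeast.csInf_eq ⟨Set.mem_image_of_mem f hi, ?_⟩).symm⟩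
  rintro _ ⟨j, hj, rfl⟩
  exact h j hj

theorem Set.Finite.eq_csSup_image_iff {β : Type*} [ConditionallyCompleteLinearOrder α]
    {f : β → α} {s : Set β} (hs : s.Finite) {i : β} (hi : i ∈ s) :
    f i = sSup (f '' s) ↔ ∀ j ∈ s, f j ≤ f i :=
  Set.Finite.eq_csInf_image_iff (α := αᵒᵈ) hs hi

theorem setOf_eq_csInf_image_Iic [ConditionallyCompleteLinearOrder α] (f : ℕ → α) (k : ℕ) :
    {i | i ≤ k ∧ f i = sInf (f '' Set.Iic k)} = {i | i ≤ k ∧ ∀ j ≤ k, f i ≤ f j} := by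
  ext i
  exact and_congr_right fun hi => (Set.finite_Iic k).eq_csInf_image_iff hi

theorem setOf_eq_csSup_image_Iic [ConditionallyCompleteLinearOrder α] (f : ℕ → α) (k : ℕ) :
    {i | i ≤ k ∧ f i = sSup (f '' Set.Iic k)} = {i | i ≤ k ∧ ∀ j ≤ k, f j ≤ f i} := by
  ext i
  exact and_congr_right fun hi => (Set.finite_Iic k).eq_csSup_image_iff hi

theorem firstArgmax_spec [LinearOrder α] (f : ℕ → α) (k : ℕ) :
    firstArgmax f k ≤ k ∧ ∀ j ≤ k, f j ≤ f (firstArgmax f k) := by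
  obtain ⟨a, ha, hmax⟩ := Set.exists_max_image (Set.Iic k) f (Set.finite_Iic k) Set.nonempty_Iic
  exact Nat.sInf_mem (s := {i | i ≤ k ∧ ∀ j ≤ k, f j ≤ f i}) ⟨a, ha, hmax⟩

theorem lastArgmin_eq_sub_firstArgmax [AddCommGroup α] [LinearOrder α] [IsOrderedAddMonoid α]
    {f g : ℕ → α} {k : ℕ} {c : α} (hg : ∀ i ≤ k, g i = c - f (k - i)) :
    lastArgmin g k = k - firstArgmax f k := by
  obtain ⟨ha, hmax⟩ := firstArgmax_spec f k
  refine IsGreatest.csSup_eq ⟨⟨Nat.sub_le k _, fun j hj => ?_⟩, fun i ⟨hi, hmin⟩ => ?_⟩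
  · rw [hg _ (Nat.sub_le k _), hg j hj, Nat.sub_sub_self ha]
    exact sub_le_sub_left (hmax _ (Nat.sub_le k j)) c
  · have hi_max : ∀ j ≤ k, f j ≤ f (k - i) := fun j hj => by
      have := hmin (k - j) (Nat.sub_le k j)
      rwa [hg i hi, hg _ (Nat.sub_le k j), Nat.sub_sub_self hj, sub_le_sub_iff_left] at this
    have : firstArgmax f k ≤ k - i := Nat.sInf_le ⟨Nat.sub_le k i, hi_max⟩
    omega

theorem lastNonpos_isGreatest [LinearOrder α] [Zero α] {n : ℕ} {f : ℕ → α} (hf : f 0 ≤ 0) :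
    IsGreatest {i | i ≤ n ∧ f i ≤ 0} (lastNonpos n f) :=
  have hbdd : BddAbove {i | i ≤ n ∧ f i ≤ 0} := ⟨n, fun _ hi => hi.1⟩
  ⟨Nat.sSup_mem ⟨0, Nat.zero_le n, hf⟩ hbdd, fun _ hi => le_csSup hbdd hi⟩

theorem lastNonpos_congr [LinearOrder α] [Zero α] {n : ℕ} {f g : ℕ → α} (hf : f 0 ≤ 0)
    (hfg : ∀ i, lastNonpos n f ≤ i → i ≤ n → g i = f i) :
    lastNonpos n g = lastNonpos n f := by
  obtain ⟨⟨hkn, hfk⟩, hub⟩ := lastNonpos_isGreatest (n := n) hf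
  refine IsGreatest.csSup_eq ⟨⟨hkn, (hfg _ le_rfl hkn).trans_le hfk⟩, fun i ⟨hin, hgi⟩ => ?_⟩
  by_contra! hlt
  exact hlt.not_ge (hub ⟨hin, (hfg i hlt.le hin) ▸ hgi⟩)

end PathFunctionals

theorem revPrefix_involutive (k : ℕ) :
    Function.Involutive fun j : ℕ => if j < k then k - 1 - j else j := by
  intro j
  by_cases hj : j < k
  · simp only [hj, if_true]
    rw [if_pos (by omega)]
    omega
  · simp [hj]

def revPrefix (k : ℕ) : Equiv.Perm ℕ := (revPrefix_involutive k).toPerm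

theorem revPrefix_apply (k j : ℕ) : revPrefix k j = if j < k then k - 1 - j else j := rfl

theorem comp_revPrefix_comp_revPrefix {β : Type*} (x : ℕ → β) (k : ℕ) :
    (x ∘ revPrefix k) ∘ revPrefix k = x := by
  funext j
  exact congrArg x (revPrefix_involutive k j)

section Walk

variable {M : Type*} [AddCommGroup M]

def walk (x : ℕ → M) (i : ℕ) : M := ∑ j ∈ range i, x j

@[simp] theorem walk_zero (x : ℕ → M) : walk x 0 = 0 := by simp [walk]

theorem walk_comp_revPrefix_of_le (x : ℕ → M) {i k : ℕ} (hi : i ≤ k) :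
    walk (x ∘ revPrefix k) i = walk x k - walk x (k - i) := by
  have hrev : walk (x ∘ revPrefix k) i = ∑ j ∈ range i, x (k - i + j) := by
    rw [walk, ← Finset.sum_range_reflect]
    refine Finset.sum_congr rfl fun j hj => ?_
    rw [Finset.mem_range] at hj
    rw [Function.comp_apply, revPrefix_apply, if_pos (by omega)]
    congr 1
    omega
  rw [hrev, eq_sub_iff_add_eq', walk, walk, ← Finset.sum_range_add, Nat.sub_add_cancel hi]

theorem walk_comp_revPrefix_of_ge (x : ℕ → M) {i k : ℕ} (hi : k ≤ i) :
    walk (x ∘ revPrefix k) i = walk x i := by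
  have hsplit (y : ℕ → M) : walk y i = walk y k + ∑ j ∈ Ico k i, y j :=
    (Finset.sum_range_add_sum_Ico y hi).symm
  rw [hsplit, hsplit, walk_comp_revPrefix_of_le x le_rfl, Nat.sub_self, walk_zero, sub_zero]
  congr 1
  refine Finset.sum_congr rfl fun j hj => ?_
  rw [Function.comp_apply, revPrefix_apply, if_neg (Finset.mem_Ico.1 hj).1.not_gt]

variable [LinearOrder M]

theorem lastNonpos_walk_comp_revPrefix (x : ℕ → M) {n k : ℕ} (hk : lastNonpos n (walk x) = k) :
    lastNonpos n (walk (x ∘ revPrefix k)) = k := by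
  subst hk
  exact lastNonpos_congr (walk_zero x).le fun i hi _ => walk_comp_revPrefix_of_ge x hi

theorem lastNonpos_walk_comp_revPrefix_iff (x : ℕ → M) {n k : ℕ} :
    lastNonpos n (walk (x ∘ revPrefix k)) = k ↔ lastNonpos n (walk x) = k :=
  ⟨fun h => comp_revPrefix_comp_revPrefix x k ▸ lastNonpos_walk_comp_revPrefix _ h,
    lastNonpos_walk_comp_revPrefix x⟩

theorem lastArgmin_walk_comp_revPrefix [IsOrderedAddMonoid M] (x : ℕ → M) (k : ℕ) :
    lastArgmin (walk (x ∘ revPrefix k)) k = k - firstArgmax (walk x) k :=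
  lastArgmin_eq_sub_firstArgmax fun _ hi => walk_comp_revPrefix_of_le x hi

noncomputable def reverseToLastNonpos (n : ℕ) (x : ℕ → M) : ℕ → M :=
  x ∘ revPrefix (lastNonpos n (walk x))

noncomputable def fwdMinTime (n : ℕ) (x : ℕ → M) : ℕ :=
  lastArgmin (walk x) (lastNonpos n (walk x))

noncomputable def bwdMaxTime (n : ℕ) (x : ℕ → M) : ℕ :=
  lastNonpos n (walk x) - firstArgmax (walk x) (lastNonpos n (walk x))

theorem fwdMinTime_reverseToLastNonpos [IsOrderedAddMonoid M] (n : ℕ) (x : ℕ → M) :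
    fwdMinTime n (reverseToLastNonpos n x) = bwdMaxTime n x := by
  rw [fwdMinTime, reverseToLastNonpos, lastNonpos_walk_comp_revPrefix x rfl,
    lastArgmin_walk_comp_revPrefix, bwdMaxTime]

end Walk

theorem measurePreserving_comp_perm {ι β : Type*} [MeasurableSpace β] (ν : Measure β)
    [IsProbabilityMeasure ν] (e : Equiv.Perm ι) :
    MeasurePreserving (fun x : ι → β => x ∘ e) (Measure.infinitePi fun _ => ν)
      (Measure.infinitePi fun _ => ν) := by
  have he : (fun x : ι → β => x ∘ e) = MeasurableEquiv.piCongrLeft (fun _ => β) e.symm := by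
    funext x i
    simp [MeasurableEquiv.coe_piCongrLeft, Equiv.piCongrLeft_apply]
  rw [he]
  exact ⟨MeasurableEquiv.measurable _, Measure.infinitePi_map_piCongrLeft (fun _ => ν) e.symm⟩

theorem measure_eq_tsum_inter_fiber {X ι : Type*} [MeasurableSpace X] [Countable ι]
    [MeasurableSpace ι] [MeasurableSingletonClass ι] (μ : Measure X) {κ : X → ι}
    (hκ : Measurable κ) {B : Set X} (hB : MeasurableSet B) :
    μ B = ∑' k, μ (κ ⁻¹' {k} ∩ B) := by
  rw [← measure_iUnion ((pairwise_disjoint_fiber κ).mono fun _ _ h =>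
      h.mono Set.inter_subset_left Set.inter_subset_left)
      fun k => (hκ (measurableSet_singleton k)).inter hB,
    ← Set.iUnion_inter, ← Set.preimage_iUnion, Set.iUnion_of_singleton, Set.preimage_univ,
    Set.univ_inter]

theorem measurable_fiberwise {X Y ι : Type*} [MeasurableSpace X] [MeasurableSpace Y] [Countable ι]
    [MeasurableSpace ι] [MeasurableSingletonClass ι] {κ : X → ι} (hκ : Measurable κ)
    {T : ι → X → Y} (hT : ∀ k, Measurable (T k)) : Measurable fun x => T (κ x) x :=
  (measurable_from_prod_countable_right (f := Function.uncurry T) hT).comp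
    (hκ.prodMk measurable_id)

theorem measurePreserving_fiberwise {X ι : Type*} [MeasurableSpace X] [Countable ι]
    [MeasurableSpace ι] [MeasurableSingletonClass ι] {μ : Measure X} {κ : X → ι}
    (hκ : Measurable κ) {T : ι → X → X} (hT : ∀ k, MeasurePreserving (T k) μ μ)
    (hTκ : ∀ k x, κ (T k x) = k ↔ κ x = k) :
    MeasurePreserving (fun x => T (κ x) x) μ μ := by
  have hmeas : Measurable fun x => T (κ x) x := measurable_fiberwise hκ fun k => (hT k).measurable
  refine ⟨hmeas, Measure.ext fun A hA => ?_⟩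
  have hfiber (k : ι) : κ ⁻¹' {k} ∩ (fun x => T (κ x) x) ⁻¹' A = T k ⁻¹' (κ ⁻¹' {k} ∩ A) := by
    ext x
    simp only [Set.mem_inter_iff, Set.mem_preimage, Set.mem_singleton_iff]
    rw [hTκ]
    exact and_congr_right fun h => by rw [h]
  rw [Measure.map_apply hmeas hA, measure_eq_tsum_inter_fiber μ hκ (hmeas hA),
    measure_eq_tsum_inter_fiber μ hκ hA]
  refine tsum_congr fun k => ?_
  rw [hfiber, (hT k).measure_preimage ((hκ (measurableSet_singleton k)).inter hA).nullMeasurableSet]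

theorem Nat.sSup_eq_iff_isGreatest (S : Set ℕ) (m : ℕ) :
    sSup S = m ↔ IsGreatest S m ∨ (m = 0 ∧ ¬ ∃ M, IsGreatest S M) := by
  by_cases hM : ∃ M, IsGreatest S M
  · obtain ⟨M, hSM⟩ := hM
    simp only [hSM.csSup_eq, show ∃ M, IsGreatest S M from ⟨M, hSM⟩, not_true, and_false, or_false]
    exact ⟨fun h => h ▸ hSM, hSM.unique⟩
  · have hS0 : sSup S = 0 := by
      by_cases hbdd : BddAbove S
      · rcases S.eq_empty_or_nonempty with rfl | hne
        · exact csSup_empty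
        · exact absurd ⟨_, Nat.sSup_mem hne hbdd, fun _ h => le_csSup hbdd h⟩ hM
      · rw [csSup_of_not_bddAbove hbdd, csSup_empty]; rfl
    simp only [hS0, hM, not_false_eq_true, and_true]
    exact ⟨fun h => Or.inr h.symm, fun h => h.elim (fun hm => absurd ⟨m, hm⟩ hM) Eq.symm⟩

theorem measurable_sSup_setOf {X : Type*} [MeasurableSpace X] {p : X → ℕ → Prop}
    (hp : ∀ i, Measurable fun x => p x i) : Measurable fun x => sSup {i | p x i} := by
  refine measurable_to_countable' fun m => ?_
  simp only [Set.preimage, Set.mem_singleton_iff, Nat.sSup_eq_iff_isGreatest, IsGreatest,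
    upperBounds, Set.mem_ofPred_eq]
  exact measurableSet_setOfPred.2 (by fun_prop)

@[fun_prop]
theorem measurable_walk_apply (i : ℕ) : Measurable fun x : ℕ → ℝ => walk x i := by
  unfold walk
  fun_prop

section IncrementLaw

variable (n : ℕ) (ν : Measure ℝ) [IsProbabilityMeasure ν]

theorem measurable_lastNonpos_walk : Measurable fun x : ℕ → ℝ => lastNonpos n (walk x) :=
  measurable_sSup_setOf fun _ => by fun_prop

theorem measurable_fwdMinTime : Measurable (fwdMinTime (M := ℝ) n) :=
  have hτ := measurable_lastNonpos_walk n
  measurable_sSup_setOf fun _ => by fun_prop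

theorem measurable_reverseToLastNonpos : Measurable (reverseToLastNonpos (M := ℝ) n) :=
  measurable_fiberwise (measurable_lastNonpos_walk n) fun k =>
    measurable_pi_lambda _ fun j => measurable_pi_apply (revPrefix k j)

theorem measurable_bwdMaxTime : Measurable (bwdMaxTime (M := ℝ) n) :=
  funext (fwdMinTime_reverseToLastNonpos (M := ℝ) n) ▸
    (measurable_fwdMinTime n).comp (measurable_reverseToLastNonpos n)

theorem measurePreserving_reverseToLastNonpos :
    MeasurePreserving (reverseToLastNonpos n) (Measure.infinitePi fun _ => ν)
      (Measure.infinitePi fun _ => ν) :=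
  measurePreserving_fiberwise (measurable_lastNonpos_walk n)
    (fun k => measurePreserving_comp_perm ν (revPrefix k))
    (fun _ x => lastNonpos_walk_comp_revPrefix_iff x)

theorem map_fwdMinTime_eq_map_bwdMaxTime :
    (Measure.infinitePi fun _ => ν).map (fwdMinTime n) =
      (Measure.infinitePi fun _ => ν).map (bwdMaxTime n) := by
  have hrev := measurePreserving_reverseToLastNonpos n ν
  have hcomp : fwdMinTime n ∘ reverseToLastNonpos n = bwdMaxTime (M := ℝ) n :=
    funext (fwdMinTime_reverseToLastNonpos n)
  rw [← hcomp, ← Measure.map_map (measurable_fwdMinTime n) hrev.measurable, hrev.map_eq]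

end IncrementLaw

/-- →F = max{i ≤ σ : S_i = min_{j ≤ σ} S_j} and ←G = σ − min{i ≤ σ : S_i = max_{j ≤ σ} S_j}
have the same distribution. -/
theorem stmt_4 {Ω : Type*} [MeasurableSpace Ω] (μ : Measure Ω) [IsProbabilityMeasure μ]
    (n : ℕ) (ζ : ℕ → Ω → ℝ)
    (hmeas : ∀ i, Measurable (ζ i))
    (hindep : ProbabilityTheory.iIndepFun ζ μ)
    (hident : ∀ i, μ.map (ζ i) = μ.map (ζ 0))
    (S : ℕ → Ω → ℝ) (hS : ∀ i ω, S i ω = ∑ j ∈ Finset.range i, ζ j ω)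
    (σ : Ω → ℕ) (hσ : ∀ ω, σ ω = sSup {i | i ≤ n ∧ S i ω ≤ 0})
    (F G' : Ω → ℕ)
    (hF : ∀ ω, F ω = sSup {i | i ≤ σ ω ∧ S i ω = sInf ((fun j => S j ω) '' Set.Iic (σ ω))})
    (hG' : ∀ ω, G' ω =
      σ ω - sInf {i | i ≤ σ ω ∧ S i ω = sSup ((fun j => S j ω) '' Set.Iic (σ ω))}) :
    μ.map F = μ.map G' := by
  set V : Ω → ℕ → ℝ := fun ω j => ζ j ω
  have hV : Measurable V := measurable_pi_lambda _ hmeas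
  have hlaw : μ.map V = Measure.infinitePi fun _ => μ.map (ζ 0) := by
    rw [hindep.map_fun_eq_infinitePi_map hmeas]
    simp_rw [hident]
  have : IsProbabilityMeasure (μ.map (ζ 0)) :=
    Measure.isProbabilityMeasure_map (hmeas 0).aemeasurable
  have hSV : ∀ i ω, S i ω = walk (V ω) i := hS
  have hF_eq : F = fwdMinTime n ∘ V := funext fun ω => by
    simp only [hF, hσ, hSV, setOf_eq_csInf_image_Iic]
    rfl
  have hG'_eq : G' = bwdMaxTime n ∘ V := funext fun ω => by
    simp only [hG', hσ, hSV, setOf_eq_csSup_image_Iic]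
    rfl
  rw [hF_eq, hG'_eq, ← Measure.map_map (measurable_fwdMinTime n) hV,
    ← Measure.map_map (measurable_bwdMaxTime n) hV, hlaw, map_fwdMinTime_eq_map_bwdMaxTime]
end
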